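/- Let δ1 be a potential separator with centre-distance c1 and border-distance b1, and fix u ∈ {x,y,z}. Define δ̃ by: δ̃({u,u'}) = 0 for all u' ≠ u; δ̃({min,max}) = max{δ1({min,max}), δ1({min,u}) + δ1({u,max}) + 1}; δ̃({u',u''}) = max{δ1({u',u''}), δ1({u',u}) + δ1({u,u''}) + 1} where {x,y,z} = {u,u',u''}; and δ̃({m,u'}) = max{δ1({m,u'}), δ1({m,u}) + δ1({u,u'}) + 1} for m ∈ {min,max} and u' ∈ {x,y,z}\{u}. Then c(δ̃) ≤ c1 + 1 and b(δ̃) ≤ b1 + 2·c1 + 2. -/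
import Mathlib

/-- The five "positions" min, max, x, y, z. -/
inductive Var where
  | vmin | vmax | vx | vy | vz
deriving DecidableEq

open Var

/-- Border-distance. -/
def bd (δ : Var → Var → ℕ) : ℕ :=
  max (δ vmin vmax)
    (([vx, vy, vz].map (fun a => [vx, vy, vz].map
        (fun a' => δ vmin a + δ a' vmax))).flatten.foldr max 0)

/-- Centre-distance. -/
def cd (δ : Var → Var → ℕ) : ℕ :=
  [δ vx vy + δ vx vz, δ vx vy + δ vy vz, δ vx vz + δ vy vz].foldr max 0

theorem bd_eq' (δ : Var → Var → ℕ) : bd δ = max (δ vmin vmax)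
    (max (δ vmin vx + δ vx vmax) (max (δ vmin vx + δ vy vmax) (max (δ vmin vx + δ vz vmax)
     (max (δ vmin vy + δ vx vmax) (max (δ vmin vy + δ vy vmax) (max (δ vmin vy + δ vz vmax)
     (max (δ vmin vz + δ vx vmax) (max (δ vmin vz + δ vy vmax)
       (max (δ vmin vz + δ vz vmax) 0))))))))) := rfl

theorem cd_eq' (δ : Var → Var → ℕ) : cd δ =
    max (δ vx vy + δ vx vz) (max (δ vx vy + δ vy vz) (max (δ vx vz + δ vy vz) 0)) := rfl

theorem cLB (δ : Var → Var → ℕ) :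
    δ vx vy + δ vx vz ≤ cd δ ∧ δ vx vy + δ vy vz ≤ cd δ ∧ δ vx vz + δ vy vz ≤ cd δ := by
  rw [cd_eq']; omega

theorem bLB (δ : Var → Var → ℕ) :
    δ vmin vmax ≤ bd δ ∧
    δ vmin vx + δ vx vmax ≤ bd δ ∧ δ vmin vx + δ vy vmax ≤ bd δ ∧ δ vmin vx + δ vz vmax ≤ bd δ ∧
    δ vmin vy + δ vx vmax ≤ bd δ ∧ δ vmin vy + δ vy vmax ≤ bd δ ∧ δ vmin vy + δ vz vmax ≤ bd δ ∧
    δ vmin vz + δ vx vmax ≤ bd δ ∧ δ vmin vz + δ vy vmax ≤ bd δ ∧ δ vmin vz + δ vz vmax ≤ bd δ := by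
  rw [bd_eq']; omega

set_option maxHeartbeats 2000000 in
theorem stmt_9 (δ1 δt : Var → Var → ℕ)
    (hsym1 : ∀ a b, δ1 a b = δ1 b a) (hsymt : ∀ a b, δt a b = δt b a)
    (u u' u'' : Var)
    (hset : ({u, u', u''} : Finset Var) = {vx, vy, vz})
    (hne : u ≠ u' ∧ u ≠ u'' ∧ u' ≠ u'')
    (hzero : ∀ v : Var, v ≠ u → δt u v = 0)
    (hminmax : δt vmin vmax =
      max (δ1 vmin vmax) (δ1 vmin u + δ1 u vmax + 1))
    (hcentre : δt u' u'' =
      max (δ1 u' u'') (δ1 u' u + δ1 u u'' + 1))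
    (hborder : ∀ m ∈ ({vmin, vmax} : Finset Var), ∀ w ∈ ({u', u''} : Finset Var),
      δt m w = max (δ1 m w) (δ1 m u + δ1 u w + 1)) :
    cd δt ≤ cd δ1 + 1 ∧ bd δt ≤ bd δ1 + 2 * cd δ1 + 2 := by
  obtain ⟨h1, h2, h3⟩ := hne
  have hu : u = vx ∨ u = vy ∨ u = vz := by
    have : u ∈ ({vx, vy, vz} : Finset Var) := hset ▸ (by simp)
    simpa using this
  have hu' : u' = vx ∨ u' = vy ∨ u' = vz := by
    have : u' ∈ ({vx, vy, vz} : Finset Var) := hset ▸ (by simp [Finset.mem_insert])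
    simpa using this
  have hu'' : u'' = vx ∨ u'' = vy ∨ u'' = vz := by
    have : u'' ∈ ({vx, vy, vz} : Finset Var) := hset ▸ (by simp [Finset.mem_insert])
    simpa using this
  have hb1 := hborder vmin (by simp) u' (by simp)
  have hb2 := hborder vmin (by simp) u'' (by simp)
  have hb3 := hborder vmax (by simp) u' (by simp)
  have hb4 := hborder vmax (by simp) u'' (by simp)
  have hz1 := hzero u' (Ne.symm h1)
  have hz2 := hzero u'' (Ne.symm h2)
  have hz3 : δt u vmin = 0 := hzero vmin (by rcases hu with h|h|h <;> subst h <;> decide)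
  have hz4 : δt u vmax = 0 := hzero vmax (by rcases hu with h|h|h <;> subst h <;> decide)
  have s1 := hsymt vmin u; have s2 := hsymt vmax u
  have s3 := hsymt u' u; have s4 := hsymt u'' u
  have s5 := hsymt u'' u'
  have s6 := hsymt u' vmax; have s7 := hsymt u'' vmax
  have s8 := hsymt u' vmin; have s9 := hsymt u'' vmin
  have t1 := hsym1 vmin u; have t2 := hsym1 vmax u
  have t3 := hsym1 u' u; have t4 := hsym1 u'' u
  have t5 := hsym1 u'' u'
  have t6 := hsym1 vmin u'; have t7 := hsym1 vmin u''
  have t8 := hsym1 vmax u'; have t9 := hsym1 vmax u''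
  obtain ⟨C1, C2, C3⟩ := cLB δ1
  obtain ⟨B0, B1, B2, B3, B4, B5, B6, B7, B8, B9⟩ := bLB δ1
  clear hborder hzero hset hsym1 hsymt
  rw [cd_eq' δt, bd_eq' δt]
  simp only [max_le_iff]
  rcases hu with rfl|rfl|rfl <;> rcases hu' with rfl|rfl|rfl <;>
    rcases hu'' with rfl|rfl|rfl <;>
    first
      | (exact absurd rfl h1)
      | (exact absurd rfl h2)
      | (exact absurd rfl h3)
      | (and_intros <;> omega)
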